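/- Let -1/2 < s ≤ 3. There exists a constant C = C(s) such that for every μ ≥ 4, ( ∫_ℝ [ ⟨ξ⟩^s (μ + |ξ|)^{3/2} / (μ⁶ + |2ξ + μ|⁶) ]² dξ )^{1/2} ≤ C μ^{s-4}. -/

import Mathlib

/-!
The denominator is comparable to `(μ + |ξ|)⁶`, since one of `μ`, `|2ξ + μ|` is at least
`(μ + |ξ|) / 2`, and `⟨ξ⟩` is comparable to `1 + |ξ|`; so the squared integrand is dominated by
`(1 + |ξ|)^(2s) (μ + |ξ|)^(-9)`. On `|ξ| ≤ μ` this is at most `μ^(-9) (1 + |ξ|)^(2s)`, whose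
integral is `O(μ^(2s-8))` because `2s > -1`. On `|ξ| > μ ≥ 1` the factor `1 + |ξ|` is comparable
to `μ + |ξ|`, and `∫ (μ + |ξ|)^(2s-9) dξ = O(μ^(2s-8))` because `2s - 9 < -1`.
-/

open MeasureTheory

noncomputable def jb (x : ℝ) : ℝ := Real.sqrt (1 + x ^ 2)

open Set

lemma integrable_comp_abs_of_integrableOn_Ioi {f : ℝ → ℝ} (hf : IntegrableOn f (Ioi 0)) :
    Integrable (fun x => f |x|) := by
  have hIoi : IntegrableOn (fun x => f |x|) (Ioi 0) :=
    hf.congr_fun (fun x hx => by rw [abs_of_pos hx]) measurableSet_Ioi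
  have hIic : IntegrableOn (fun x => f |x|) (Iic 0) := by
    have hneg : MeasurableEmbedding fun x : ℝ => -x := (Homeomorph.neg ℝ).measurableEmbedding
    rw [← Measure.map_neg_eq_self (volume : Measure ℝ), hneg.integrableOn_map_iff]
    simpa [Function.comp_def] using (integrableOn_Ici_iff_integrableOn_Ioi).mpr hIoi
  simpa using hIic.union hIoi

lemma integral_Ioi_add_rpow {a p : ℝ} (ha : 0 < a) (hp : p < -1) :
    ∫ t in Ioi (0 : ℝ), (a + t) ^ p = a ^ (p + 1) / -(p + 1) := by
  have := (measurePreserving_add_right volume a).setIntegral_preimage_emb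
    (measurableEmbedding_addRight a) (fun x : ℝ => x ^ p) (Ioi a)
  rw [preimage_add_const_Ioi, sub_self] at this
  simp_rw [add_comm a]
  rw [this, integral_Ioi_rpow_of_lt hp ha, neg_div, div_neg]

lemma integrable_add_abs_rpow {a p : ℝ} (ha : 0 < a) (hp : p < -1) :
    Integrable (fun x : ℝ => (a + |x|) ^ p) :=
  integrable_comp_abs_of_integrableOn_Ioi (f := fun t => (a + t) ^ p) <| by
    simpa only [add_comm a] using integrableOn_add_rpow_Ioi_of_lt hp (by linarith : -a < 0)

lemma integral_add_abs_rpow {a p : ℝ} (ha : 0 < a) (hp : p < -1) :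
    ∫ x : ℝ, (a + |x|) ^ p = 2 * (a ^ (p + 1) / -(p + 1)) := by
  rw [integral_comp_abs (f := fun t => (a + t) ^ p), integral_Ioi_add_rpow ha hp]

lemma continuous_one_add_abs_rpow (r : ℝ) : Continuous fun x : ℝ => (1 + |x|) ^ r :=
  (continuous_const.add continuous_abs).rpow_const fun x =>
    Or.inl (by positivity : (1 : ℝ) + |x| ≠ 0)

lemma integral_Icc_one_add_abs_rpow {a r : ℝ} (ha : 0 ≤ a) (hr : -1 < r) :
    ∫ x in Icc (-a) a, (1 + |x|) ^ r = 2 * (((1 + a) ^ (r + 1) - 1) / (r + 1)) := by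
  have hcont := continuous_one_add_abs_rpow r
  have hhalf : ∫ x in (0 : ℝ)..a, (1 + |x|) ^ r = ((1 + a) ^ (r + 1) - 1) / (r + 1) := by
    rw [intervalIntegral.integral_congr (g := fun x => (x + 1) ^ r) fun x hx => by
        rw [uIcc_of_le ha] at hx; simp [abs_of_nonneg hx.1, add_comm],
      intervalIntegral.integral_comp_add_right (fun t => t ^ r), integral_rpow (Or.inl hr),
      zero_add, Real.one_rpow, add_comm a]
  have hsymm : ∫ x in (-a)..0, (1 + |x|) ^ r = ∫ x in (0 : ℝ)..a, (1 + |x|) ^ r := by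
    simpa using (intervalIntegral.integral_comp_neg (a := 0) (b := a) fun x => (1 + |x|) ^ r).symm
  rw [integral_Icc_eq_integral_Ioc, ← intervalIntegral.integral_of_le (by linarith),
    ← intervalIntegral.integral_add_adjacent_intervals (hcont.intervalIntegrable _ _)
      (hcont.intervalIntegrable _ _), hsymm, hhalf]
  ring

lemma rpow_le_two_mul_rpow {a b p : ℝ} (hb : 0 < b) (hba : b ≤ a) (hab : a ≤ 2 * b)
    (hp : -1 ≤ p) : b ^ p ≤ 2 * a ^ p := by
  rcases le_or_gt 0 p with hp0 | hp0
  · nlinarith [Real.rpow_le_rpow hb.le hba hp0, Real.rpow_nonneg (hb.le.trans hba) p]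
  · have ha : 0 < a := hb.trans_le hba
    calc b ^ p ≤ (a / 2) ^ p := Real.rpow_le_rpow_of_nonpos (by positivity) (by linarith) hp0.le
      _ = (2 : ℝ) ^ (-p) * a ^ p := by
        rw [Real.div_rpow ha.le zero_le_two, Real.rpow_neg zero_le_two]; ring
      _ ≤ 2 * a ^ p := by
        gcongr
        simpa using Real.rpow_le_rpow_of_exponent_le one_le_two (by linarith : -p ≤ 1)

lemma ENNReal.rpow_half_le_ofReal {A : ENNReal} {b : ℝ} (hb : 0 ≤ b)
    (h : A ≤ ENNReal.ofReal (b ^ 2)) : A ^ (1 / 2 : ℝ) ≤ ENNReal.ofReal b := by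
  calc A ^ (1 / 2 : ℝ) ≤ ENNReal.ofReal (b ^ 2) ^ (1 / 2 : ℝ) := by gcongr
    _ = ENNReal.ofReal b := by
      rw [ENNReal.ofReal_rpow_of_nonneg (by positivity) (by norm_num), ← Real.sqrt_eq_rpow,
        Real.sqrt_sq hb]

lemma jb_pos (x : ℝ) : 0 < jb x := Real.sqrt_pos.mpr (by positivity)

lemma jb_le_one_add_abs (x : ℝ) : jb x ≤ 1 + |x| :=
  Real.sqrt_le_iff.mpr ⟨by positivity, by nlinarith [sq_abs x, abs_nonneg x]⟩

lemma one_add_abs_le_two_mul_jb (x : ℝ) : 1 + |x| ≤ 2 * jb x := by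
  rw [jb, ← Real.sqrt_sq (by norm_num : (0 : ℝ) ≤ 2), ← Real.sqrt_mul (by norm_num)]
  exact Real.le_sqrt_of_sq_le (by nlinarith [sq_abs x, sq_nonneg (|x| - 1)])

lemma jb_rpow_le {s : ℝ} (hs : -1 ≤ s) (x : ℝ) : jb x ^ s ≤ 2 * (1 + |x|) ^ s :=
  rpow_le_two_mul_rpow (jb_pos x) (jb_le_one_add_abs x) (one_add_abs_le_two_mul_jb x) hs

lemma add_abs_le_two_mul_max {μ : ℝ} (hμ : 0 ≤ μ) (ξ : ℝ) :
    μ + |ξ| ≤ 2 * max μ |2 * ξ + μ| := by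
  rcases le_total |ξ| μ with h | h
  · linarith [le_max_left μ |2 * ξ + μ|]
  · have : 2 * |ξ| - μ ≤ |2 * ξ + μ| := by
      have := abs_sub_abs_le_abs_sub (2 * ξ) (-μ)
      rw [abs_mul, abs_two, abs_neg, abs_of_nonneg hμ, sub_neg_eq_add] at this
      exact this
    linarith [le_max_right μ |2 * ξ + μ|]

lemma add_abs_pow_le {μ : ℝ} (hμ : 0 ≤ μ) (ξ : ℝ) (n : ℕ) :
    (μ + |ξ|) ^ n ≤ 2 ^ n * (μ ^ n + |2 * ξ + μ| ^ n) := by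
  calc (μ + |ξ|) ^ n ≤ (2 * max μ |2 * ξ + μ|) ^ n := by
        gcongr; exact add_abs_le_two_mul_max hμ ξ
    _ ≤ 2 ^ n * (μ ^ n + |2 * ξ + μ| ^ n) := by
        rw [mul_pow]
        gcongr
        rcases le_total μ |2 * ξ + μ| with h | h
        · rw [max_eq_right h]; linarith [pow_nonneg hμ n]
        · rw [max_eq_left h]; linarith [pow_nonneg (abs_nonneg (2 * ξ + μ)) n]

lemma kernel_sq_le {s μ : ℝ} (hs : -1 ≤ s) (hμ : 0 < μ) (ξ : ℝ) :
    (jb ξ ^ s * (μ + |ξ|) ^ ((3 : ℝ) / 2) / (μ ^ 6 + |2 * ξ + μ| ^ 6)) ^ 2 ≤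
      2 ^ 14 * ((1 + |ξ|) ^ (2 * s) * (μ + |ξ|) ^ (-9 : ℝ)) := by
  set N := μ + |ξ|
  have hN0 : 0 < N := by positivity
  have hden : N ^ 6 / 2 ^ 6 ≤ μ ^ 6 + |2 * ξ + μ| ^ 6 := by
    rw [div_le_iff₀ (by positivity), mul_comm]; exact add_abs_pow_le hμ.le ξ 6
  have hjb := jb_rpow_le hs ξ
  have hjb_nonneg := Real.rpow_nonneg (jb_pos ξ).le s
  calc _ ≤ (2 * (1 + |ξ|) ^ s * N ^ ((3 : ℝ) / 2) / (N ^ 6 / 2 ^ 6)) ^ 2 := by gcongr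
    _ = 2 ^ 14 * ((1 + |ξ|) ^ (2 * s) * N ^ (-9 : ℝ)) := by
      have h2s : (1 + |ξ|) ^ (2 * s) = ((1 + |ξ|) ^ s) ^ 2 := by
        rw [← Real.rpow_mul_natCast (by positivity), mul_comm]; norm_num
      have h3 : (N ^ ((3 : ℝ) / 2)) ^ 2 = N ^ 3 := by
        rw [← Real.rpow_mul_natCast hN0.le]; norm_num
      have h9 : N ^ (-9 : ℝ) = (N ^ 9)⁻¹ := by
        rw [Real.rpow_neg hN0.le]; norm_cast
      rw [h2s, h9, div_pow, mul_pow, h3]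
      field_simp

section Weight

variable {μ p q : ℝ}

lemma one_add_abs_rpow_mul_rpow_le (hμ : 1 ≤ μ) (hp : -1 ≤ p) (hq : 0 ≤ q) (ξ : ℝ) :
    (1 + |ξ|) ^ p * (μ + |ξ|) ^ (-q) ≤
      (Icc (-μ) μ).indicator (fun x => μ ^ (-q) * (1 + |x|) ^ p) ξ + 2 * (μ + |ξ|) ^ (p - q) := by
  have hμ0 : 0 < μ := by linarith
  rcases le_or_gt |ξ| μ with h | h
  · rw [indicator_of_mem (show ξ ∈ Icc (-μ) μ from abs_le.mp h), mul_comm]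
    have : (μ + |ξ|) ^ (-q) ≤ μ ^ (-q) :=
      Real.rpow_le_rpow_of_nonpos hμ0 (by linarith [abs_nonneg ξ]) (by linarith)
    have : 0 ≤ (μ + |ξ|) ^ (p - q) := by positivity
    nlinarith [Real.rpow_nonneg (by positivity : (0 : ℝ) ≤ 1 + |ξ|) p]
  · rw [indicator_of_notMem fun hξ : ξ ∈ Icc (-μ) μ => h.not_ge (abs_le.mpr hξ), zero_add,
      Real.rpow_sub (by positivity), div_eq_mul_inv, ← Real.rpow_neg (by positivity), ← mul_assoc]
    gcongr
    exact rpow_le_two_mul_rpow (by positivity) (by linarith) (by linarith) hp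

lemma lintegral_one_add_abs_rpow_mul_rpow_le (hμ : 1 ≤ μ) (hp : -1 < p) (hpq : p - q < -1) :
    ∫⁻ ξ, ENNReal.ofReal ((1 + |ξ|) ^ p * (μ + |ξ|) ^ (-q)) ≤
      ENNReal.ofReal ((2 * 2 ^ (p + 1) / (p + 1) + 4 / (q - p - 1)) * μ ^ (p + 1 - q)) := by
  have hμ0 : 0 < μ := by linarith
  set G₁ : ℝ → ℝ := (Icc (-μ) μ).indicator fun x => μ ^ (-q) * (1 + |x|) ^ p
  set G₂ : ℝ → ℝ := fun ξ => 2 * (μ + |ξ|) ^ (p - q)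
  have hG₁ : Integrable G₁ :=
    ((continuous_one_add_abs_rpow p).const_mul _).integrableOn_Icc.integrable_indicator
      measurableSet_Icc
  have hG₂ : Integrable G₂ := (integrable_add_abs_rpow hμ0 hpq).const_mul 2
  have hIG₁ : ∫ ξ, G₁ ξ ≤ 2 * 2 ^ (p + 1) / (p + 1) * μ ^ (p + 1 - q) := by
    rw [integral_indicator measurableSet_Icc, integral_const_mul,
      integral_Icc_one_add_abs_rpow hμ0.le hp]
    have : (1 + μ) ^ (p + 1) ≤ 2 ^ (p + 1) * μ ^ (p + 1) := by
      rw [← Real.mul_rpow zero_le_two hμ0.le]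
      exact Real.rpow_le_rpow (by positivity) (by linarith) (by linarith)
    have hp1 : 0 < p + 1 := by linarith
    rw [show p + 1 - q = (p + 1) + -q by ring, Real.rpow_add hμ0]
    calc _ ≤ μ ^ (-q) * (2 * ((1 + μ) ^ (p + 1) / (p + 1))) := by gcongr; linarith
      _ ≤ μ ^ (-q) * (2 * (2 ^ (p + 1) * μ ^ (p + 1) / (p + 1))) := by gcongr
      _ = _ := by ring
  have hIG₂ : ∫ ξ, G₂ ξ = 4 / (q - p - 1) * μ ^ (p + 1 - q) := by
    rw [integral_const_mul, integral_add_abs_rpow hμ0 hpq, show p - q + 1 = p + 1 - q by ring,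
      show -(p + 1 - q) = q - p - 1 by ring]
    ring
  calc ∫⁻ ξ, ENNReal.ofReal ((1 + |ξ|) ^ p * (μ + |ξ|) ^ (-q))
      ≤ ∫⁻ ξ, ENNReal.ofReal (G₁ ξ + G₂ ξ) := lintegral_mono fun ξ =>
        ENNReal.ofReal_le_ofReal (one_add_abs_rpow_mul_rpow_le hμ hp.le (by linarith) ξ)
    _ = ENNReal.ofReal (∫ ξ, G₁ ξ + G₂ ξ) :=
        (ofReal_integral_eq_lintegral_ofReal (hG₁.add hG₂) (Filter.Eventually.of_forall fun ξ =>
          add_nonneg (indicator_nonneg (fun x _ => by positivity) ξ) (by positivity))).symm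
    _ ≤ _ := by
      rw [integral_add hG₁ hG₂, hIG₂, add_mul]
      gcongr

end Weight

theorem stmt14 (s : ℝ) (hs₁ : -(1/2 : ℝ) < s) (hs₂ : s ≤ 3) :
    ∃ C : ℝ, 0 < C ∧
      ∀ μ : ℝ, 4 ≤ μ →
        (∫⁻ ξ : ℝ, ENNReal.ofReal
            ((jb ξ ^ s * (μ + |ξ|) ^ ((3 : ℝ)/2) / (μ ^ 6 + |2 * ξ + μ| ^ 6)) ^ 2)) ^ (1/2 : ℝ) ≤
          ENNReal.ofReal (C * μ ^ (s - 4)) := by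
  set K : ℝ := 2 * 2 ^ (2 * s + 1) / (2 * s + 1) + 4 / (9 - 2 * s - 1)
  have hK : 0 < K := by
    have : 0 < 2 * s + 1 := by linarith
    have : 0 < 9 - 2 * s - 1 := by linarith
    positivity
  refine ⟨2 ^ 7 * Real.sqrt K, by positivity, fun μ hμ => ?_⟩
  have hμ0 : 0 < μ := by linarith
  apply ENNReal.rpow_half_le_ofReal (by positivity)
  calc ∫⁻ ξ, ENNReal.ofReal
        ((jb ξ ^ s * (μ + |ξ|) ^ ((3 : ℝ) / 2) / (μ ^ 6 + |2 * ξ + μ| ^ 6)) ^ 2)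
      ≤ ∫⁻ ξ, ENNReal.ofReal (2 ^ 14) *
          ENNReal.ofReal ((1 + |ξ|) ^ (2 * s) * (μ + |ξ|) ^ (-9 : ℝ)) := by
        gcongr with ξ
        rw [← ENNReal.ofReal_mul (by norm_num)]
        exact ENNReal.ofReal_le_ofReal (kernel_sq_le (by linarith) hμ0 ξ)
    _ ≤ ENNReal.ofReal (2 ^ 14) * ENNReal.ofReal (K * μ ^ (2 * s + 1 - 9)) := by
        rw [lintegral_const_mul' _ _ ENNReal.ofReal_ne_top]
        gcongr
        exact lintegral_one_add_abs_rpow_mul_rpow_le (by linarith) (by linarith) (by linarith)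
    _ = ENNReal.ofReal ((2 ^ 7 * Real.sqrt K * μ ^ (s - 4)) ^ 2) := by
        rw [← ENNReal.ofReal_mul (by norm_num), mul_pow, mul_pow, Real.sq_sqrt hK.le,
          ← Real.rpow_mul_natCast hμ0.le]
        ring_nf
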